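/- Let M = [[a,b],[c,d]] be a 2×2 integer matrix with determinant D = ad − bc ≠ 0, and let f ∈ ℤ[x] be nonzero. If deg(μ_{M^{adj}}(f)) = deg f, where M^{adj} = [[d,−b],[−c,a]], then μ_M(μ_{M^{adj}}(f)) = D^{deg f} · f. -/

import Mathlib

/-!
Homogenize `f` in degree `n = deg f` to a binary form `F`. Then `μ_M(f) = F(ax+b, cx+d)`, and
when `deg μ_{M^adj}(f) = n` the homogenization of `μ_{M^adj}(f)` in degree `n` is
`F(dX₀ - bX₁, -cX₀ + aX₁)`. Composing the two linear substitutions multiplies the matrices,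
`M^adj · M = D · I`, so `μ_M(μ_{M^adj}(f)) = F(Dx, D) = D^n F(x, 1) = D^n f`.
-/

open Polynomial

/-- The Möbius transform of `f` induced by the matrix `[[a,b],[c,d]]`:
`μ_M(f) = Σ_{j≤n} f_j (ax+b)^j (cx+d)^(n-j)` where `n = deg f`. -/
noncomputable def mobius (a b c d : ℤ) (f : Polynomial ℤ) : Polynomial ℤ :=
  ∑ j ∈ Finset.range (f.natDegree + 1),
    Polynomial.C (f.coeff j) * (Polynomial.C a * Polynomial.X + Polynomial.C b) ^ j *
      (Polynomial.C c * Polynomial.X + Polynomial.C d) ^ (f.natDegree - j)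

namespace Polynomial

section CommSemiring

variable {R A : Type*} [CommSemiring R] [CommSemiring A] [Algebra R A]

lemma aeval_homogenize_eq_sum (p : R[X]) (n : ℕ) (x y : A) :
    MvPolynomial.aeval ![x, y] (p.homogenize n) =
      ∑ j ∈ Finset.range (n + 1), algebraMap R A (p.coeff j) * x ^ j * y ^ (n - j) := by
  simp only [homogenize, map_sum, MvPolynomial.aeval_monomial,
    Finset.Nat.sum_antidiagonal_eq_sum_range_succ_mk]
  refine Finset.sum_congr rfl fun j _ => ?_
  simp [Finsupp.prod_fintype, Fin.prod_univ_two, mul_assoc]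

lemma aeval_homogenize_mul (p : R[X]) (n : ℕ) (r x y : A) :
    MvPolynomial.aeval ![r * x, r * y] (p.homogenize n) =
      r ^ n * MvPolynomial.aeval ![x, y] (p.homogenize n) := by
  simp only [aeval_homogenize_eq_sum, Finset.mul_sum]
  refine Finset.sum_congr rfl fun j hj => ?_
  have hjn : j ≤ n := Nat.lt_succ_iff.mp (Finset.mem_range.mp hj)
  rw [← Nat.add_sub_cancel' hjn, Nat.add_sub_cancel_left, pow_add]
  ring

end CommSemiring

section CommRing

variable {R : Type*} [CommRing R]

lemma homogenize_aeval_linear {q : MvPolynomial (Fin 2) R} {n : ℕ} (hq : q.IsHomogeneous n)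
    (u v w z : R) :
    (MvPolynomial.aeval ![C u * X + C v, C w * X + C z] q).homogenize n =
      MvPolynomial.aeval ![.C u * .X 0 + .C v * .X 1, .C w * .X 0 + .C z * .X 1] q := by
  apply homogenize_eq_of_isHomogeneous
  · have hlin (s t : R) : (.C s * .X 0 + .C t * .X 1 : MvPolynomial (Fin 2) R).IsHomogeneous 1 :=
      ((MvPolynomial.isHomogeneous_X R 0).C_mul s).add ((MvPolynomial.isHomogeneous_X R 1).C_mul t)
    simpa only [one_mul] using hq.aeval _ (n := 1) (Fin.forall_fin_two.mpr ⟨hlin u v, hlin w z⟩)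
  · rw [MvPolynomial.comp_aeval_apply]
    congr 1
    ext i
    fin_cases i <;> simp [algebraMap_eq]

end CommRing

end Polynomial

lemma mobius_eq_aeval_homogenize (a b c d : ℤ) (f : ℤ[X]) :
    mobius a b c d f =
      MvPolynomial.aeval ![C a * X + C b, C c * X + C d] (f.homogenize f.natDegree) := by
  rw [aeval_homogenize_eq_sum, mobius, algebraMap_eq]

theorem stmt7_general (a b c d : ℤ) (f : Polynomial ℤ)
    (hdeg : (mobius d (-b) (-c) a f).natDegree = f.natDegree) :
    mobius a b c d (mobius d (-b) (-c) a f) =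
      Polynomial.C ((a * d - b * c) ^ f.natDegree) * f := by
  set n := f.natDegree
  have hadj : (mobius d (-b) (-c) a f).homogenize n = MvPolynomial.aeval
      ![.C d * .X 0 + .C (-b) * .X 1, .C (-c) * .X 0 + .C a * .X 1] (f.homogenize n) := by
    rw [mobius_eq_aeval_homogenize]
    exact homogenize_aeval_linear (isHomogeneous_homogenize f) _ _ _ _
  have hcomp : (fun i => MvPolynomial.aeval ![C a * X + C b, C c * X + C d]
      (![.C d * .X 0 + .C (-b) * .X 1, .C (-c) * .X 0 + .C a * .X 1] i)) =
      ![C (a * d - b * c) * X, C (a * d - b * c) * 1] := by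
    ext1 i
    fin_cases i <;>
      simp only [Fin.zero_eta, Fin.mk_one, Matrix.cons_val_zero, Matrix.cons_val_one,
        Matrix.cons_val_fin_one, map_add, map_sub, map_neg, map_mul, MvPolynomial.aeval_X,
        MvPolynomial.aeval_C, algebraMap_eq] <;> ring
  rw [mobius_eq_aeval_homogenize, hdeg, hadj, MvPolynomial.comp_aeval_apply, hcomp,
    aeval_homogenize_mul, aeval_homogenize_X_one _ le_rfl, map_pow]

/-- If `det M ≠ 0` and `deg(μ_{M^adj}(f)) = deg f`, where `M^adj = [[d,-b],[-c,a]]`,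
then `μ_M(μ_{M^adj}(f)) = D^(deg f) · f` where `D = det M = ad - bc`. -/
theorem stmt7 (a b c d : ℤ) (hdet : a * d - b * c ≠ 0) (f : Polynomial ℤ) (hf : f ≠ 0)
    (hdeg : (mobius d (-b) (-c) a f).natDegree = f.natDegree) :
    mobius a b c d (mobius d (-b) (-c) a f) =
      Polynomial.C ((a * d - b * c) ^ f.natDegree) * f :=
  stmt7_general a b c d f hdeg
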